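/- arXiv:2011.12748 — 2 statements merged into one kernel-verified Lean document; each statement's English description precedes it below -/
import Mathlib

section
/- Let n ≥ 1 and let y ∈ ℝⁿ, y ≠ 0. Then the set {x ∈ ℝⁿ : for every a ∈ ℚⁿ with ⟨a, y⟩ ≥ 0 one has ⟨a, x⟩ ≥ 0} equals the ray ℝ_{≥0}·y = {t·y : t ≥ 0}. -/
private lemma approx_bound {n : ℕ} (a b z : Fin n → ℝ) (ε : ℝ)
    (h : ∀ i, |b i - a i| ≤ ε) :
    |∑ i, b i * z i - ∑ i, a i * z i| ≤ ε * ∑ i, |z i| := by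
  have h1 : ∑ i, b i * z i - ∑ i, a i * z i = ∑ i, (b i - a i) * z i := by
    rw [← Finset.sum_sub_distrib]
    exact Finset.sum_congr rfl fun i _ => by ring
  rw [h1]
  calc |∑ i, (b i - a i) * z i| ≤ ∑ i, |(b i - a i) * z i| :=
        Finset.abs_sum_le_sum_abs _ _
    _ ≤ ∑ i, ε * |z i| := Finset.sum_le_sum fun i _ => by
        rw [abs_mul]; exact mul_le_mul_of_nonneg_right (h i) (abs_nonneg _)
    _ = ε * ∑ i, |z i| := by rw [Finset.mul_sum]

private lemma real_step {n : ℕ} (x y : Fin n → ℝ)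
    (h : ∀ a : Fin n → ℚ, 0 ≤ ∑ i, (a i : ℝ) * y i → 0 ≤ ∑ i, (a i : ℝ) * x i)
    (a : Fin n → ℝ) (ha : 0 < ∑ i, a i * y i) : 0 ≤ ∑ i, a i * x i := by
  by_contra hx
  push_neg at hx
  have hY : (0:ℝ) < ∑ i, |y i| + 1 := by positivity
  have hX : (0:ℝ) < ∑ i, |x i| + 1 := by positivity
  set ε := min ((∑ i, a i * y i)/(∑ i, |y i| + 1)) ((-∑ i, a i * x i)/(∑ i, |x i| + 1))
    with hεdef
  have hε : 0 < ε := lt_min (div_pos ha hY) (div_pos (by linarith) hX)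
  choose b hb using fun i => exists_rat_near (a i) hε
  have hbd : ∀ i, |(b i : ℝ) - a i| ≤ ε := fun i => by
    rw [abs_sub_comm]; exact (hb i).le
  have h1 : |∑ i, (b i : ℝ) * y i - ∑ i, a i * y i| ≤ ε * ∑ i, |y i| :=
    approx_bound a (fun i => (b i : ℝ)) y ε hbd
  have h2 : |∑ i, (b i : ℝ) * x i - ∑ i, a i * x i| ≤ ε * ∑ i, |x i| :=
    approx_bound a (fun i => (b i : ℝ)) x ε hbd
  have hεy : ε * (∑ i, |y i| + 1) ≤ ∑ i, a i * y i := by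
    have := min_le_left ((∑ i, a i * y i)/(∑ i, |y i| + 1))
      ((-∑ i, a i * x i)/(∑ i, |x i| + 1))
    calc ε * (∑ i, |y i| + 1) ≤ ((∑ i, a i * y i)/(∑ i, |y i| + 1)) * (∑ i, |y i| + 1) :=
          mul_le_mul_of_nonneg_right this (le_of_lt hY)
      _ = ∑ i, a i * y i := div_mul_cancel₀ _ (ne_of_gt hY)
  have hεx : ε * (∑ i, |x i| + 1) ≤ -∑ i, a i * x i := by
    have := min_le_right ((∑ i, a i * y i)/(∑ i, |y i| + 1))
      ((-∑ i, a i * x i)/(∑ i, |x i| + 1))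
    calc ε * (∑ i, |x i| + 1) ≤ ((-∑ i, a i * x i)/(∑ i, |x i| + 1)) * (∑ i, |x i| + 1) :=
          mul_le_mul_of_nonneg_right this (le_of_lt hX)
      _ = -∑ i, a i * x i := div_mul_cancel₀ _ (ne_of_gt hX)
  have hby : 0 ≤ ∑ i, (b i : ℝ) * y i := by
    have := abs_le.mp h1
    nlinarith [this.1]
  have hbx := h b hby
  have := abs_le.mp h2
  nlinarith [this.2]

/-- For nonzero `y ∈ ℝⁿ`, the set of `x` satisfying every rational linear inequality
satisfied by `y` is exactly the ray `ℝ≥0 · y`. -/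
theorem stmt5 (n : ℕ) (hn : 1 ≤ n) (y : Fin n → ℝ) (hy : y ≠ 0) :
    {x : Fin n → ℝ | ∀ a : Fin n → ℚ,
        0 ≤ ∑ i, (a i : ℝ) * y i → 0 ≤ ∑ i, (a i : ℝ) * x i} =
      {x : Fin n → ℝ | ∃ t : ℝ, 0 ≤ t ∧ x = t • y} := by
  ext x
  simp only [Set.mem_setOf_eq]
  constructor
  · intro h
    -- y has a nonzero coord, so ∑ y i ^2 > 0
    obtain ⟨j, hj⟩ := Function.ne_iff.mp hy
    have hS : 0 < ∑ i, y i * y i := by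
      apply Finset.sum_pos' (fun i _ => mul_self_nonneg _)
      exact ⟨j, Finset.mem_univ j, mul_self_pos.mpr hj⟩
    set t := (∑ i, x i * y i) / (∑ i, y i * y i) with ht
    set c : Fin n → ℝ := fun i => x i - t * y i with hc
    have hcy : ∑ i, c i * y i = 0 := by
      have : ∑ i, c i * y i = (∑ i, x i * y i) - t * ∑ i, y i * y i := by
        rw [Finset.mul_sum, ← Finset.sum_sub_distrib]
        exact Finset.sum_congr rfl fun i _ => by simp [hc]; ring
      rw [this, ht, div_mul_cancel₀ _ (ne_of_gt hS), sub_self]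
    -- for every δ > 0, ∑ c x ≤ δ * ∑ y x
    have key : ∀ δ : ℝ, 0 < δ → ∑ i, c i * x i ≤ δ * ∑ i, y i * x i := by
      intro δ hδ
      have hstep := real_step x y h (fun i => -c i + δ * y i) (by
        have : ∑ i, (-c i + δ * y i) * y i = -∑ i, c i * y i + δ * ∑ i, y i * y i := by
          rw [Finset.mul_sum, ← Finset.sum_neg_distrib, ← Finset.sum_add_distrib]
          exact Finset.sum_congr rfl fun i _ => by ring
        rw [this, hcy]
        simpa using mul_pos hδ hS)
      have heq : ∑ i, (-c i + δ * y i) * x i = -∑ i, c i * x i + δ * ∑ i, y i * x i := by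
        rw [Finset.mul_sum, ← Finset.sum_neg_distrib, ← Finset.sum_add_distrib]
        exact Finset.sum_congr rfl fun i _ => by ring
      rw [heq] at hstep
      linarith
    have hcx : ∑ i, c i * x i ≤ 0 := by
      by_contra hpos
      push_neg at hpos
      rcases le_or_gt (∑ i, y i * x i) 0 with hyx | hyx
      · have := key 1 one_pos
        nlinarith
      · have := key ((∑ i, c i * x i) / (2 * ∑ i, y i * x i))
          (div_pos hpos (by linarith))
        have h2 : (∑ i, c i * x i) / (2 * ∑ i, y i * x i) * ∑ i, y i * x i
            = (∑ i, c i * x i) / 2 := by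
          field_simp
        rw [h2] at this
        linarith
    -- ∑ c x = ∑ c c
    have hcc : ∑ i, c i * c i ≤ 0 := by
      have : ∑ i, c i * c i = ∑ i, c i * x i - t * ∑ i, c i * y i := by
        rw [Finset.mul_sum, ← Finset.sum_sub_distrib]
        exact Finset.sum_congr rfl fun i _ => by simp only [hc]; ring
      rw [this, hcy]
      linarith
    have hc0 : ∀ i, c i = 0 := by
      intro i
      have hz : ∑ i, c i * c i = 0 :=
        le_antisymm hcc (Finset.sum_nonneg fun i _ => mul_self_nonneg _)
      have := (Finset.sum_eq_zero_iff_of_nonneg (fun i _ => mul_self_nonneg (c i))).mp hz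
        i (Finset.mem_univ i)
      exact mul_self_eq_zero.mp this
    have hxeq : x = t • y := by
      funext i
      have := hc0 i
      simp only [hc] at this
      simp only [Pi.smul_apply, smul_eq_mul]
      linarith
    have hyx : 0 ≤ ∑ i, y i * x i := real_step x y h y hS
    have ht0 : 0 ≤ t := by
      rw [ht]
      apply div_nonneg _ (le_of_lt hS)
      have : ∑ i, x i * y i = ∑ i, y i * x i :=
        Finset.sum_congr rfl fun i _ => mul_comm _ _
      rw [this]; exact hyx
    exact ⟨t, ht0, hxeq⟩
  · rintro ⟨t, ht, rfl⟩ a ha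
    have : ∑ i, (a i : ℝ) * (t • y) i = t * ∑ i, (a i : ℝ) * y i := by
      rw [Finset.mul_sum]
      exact Finset.sum_congr rfl fun i _ => by simp only [Pi.smul_apply, smul_eq_mul]; ring
    rw [this]
    exact mul_nonneg ht ha
end

section
/- Let y, y' ∈ ℝⁿ be nonzero vectors with y' ∉ ℝ_{≥0}·y. Then there exists a ∈ ℚⁿ such that ⟨a, y⟩ ≥ 0 and ⟨a, y'⟩ < 0. -/
/-- Rational approximation step: if some real vector separates strictly, a rational one does. -/
lemma rat_approx_sep (n : ℕ) (v y y' : Fin n → ℝ)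
    (hP : 0 < ∑ i, v i * y i) (hQ : ∑ i, v i * y' i < 0) :
    ∃ a : Fin n → ℚ, 0 ≤ ∑ i, (a i : ℝ) * y i ∧ ∑ i, (a i : ℝ) * y' i < 0 := by
  set P : ℝ := ∑ i, v i * y i with hPdef
  set Q : ℝ := -∑ i, v i * y' i with hQdef
  have hQpos : 0 < Q := by simp [hQdef]; linarith
  set S : ℝ := (∑ i, |y i|) + (∑ i, |y' i|) with hSdef
  have hS0 : 0 ≤ S := by
    apply add_nonneg <;> exact Finset.sum_nonneg fun i _ => abs_nonneg _
  set ε : ℝ := min P Q / (S + 1) with hepsdef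
  have hεpos : 0 < ε := div_pos (lt_min hP hQpos) (by linarith)
  have hq : ∀ i, ∃ q : ℚ, |(q : ℝ) - v i| < ε := by
    intro i
    obtain ⟨q, h1, h2⟩ := exists_rat_btwn (show v i - ε < v i + ε by linarith)
    exact ⟨q, abs_sub_lt_iff.mpr ⟨by linarith, by linarith⟩⟩
  choose a ha using hq
  have key : ∀ z : Fin n → ℝ,
      |(∑ i, (a i : ℝ) * z i) - ∑ i, v i * z i| ≤ ε * ∑ i, |z i| := by
    intro z
    have h1 : (∑ i, (a i : ℝ) * z i) - ∑ i, v i * z i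
        = ∑ i, ((a i : ℝ) - v i) * z i := by
      rw [← Finset.sum_sub_distrib]; congr 1; ext i; ring
    rw [h1]
    calc |∑ i, ((a i : ℝ) - v i) * z i| ≤ ∑ i, |((a i : ℝ) - v i) * z i| :=
          Finset.abs_sum_le_sum_abs _ _
      _ = ∑ i, |(a i : ℝ) - v i| * |z i| := by simp [abs_mul]
      _ ≤ ∑ i, ε * |z i| :=
          Finset.sum_le_sum fun i _ =>
            mul_le_mul_of_nonneg_right (le_of_lt (ha i)) (abs_nonneg _)
      _ = ε * ∑ i, |z i| := (Finset.mul_sum _ _ _).symm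
  have hyS : ε * ∑ i, |y i| < min P Q := by
    have h1 : (∑ i, |y i|) < S + 1 := by
      have : 0 ≤ ∑ i, |y' i| := Finset.sum_nonneg fun i _ => abs_nonneg _
      simp only [hSdef]; linarith
    have := mul_lt_mul_of_pos_left h1 hεpos
    calc ε * ∑ i, |y i| < ε * (S + 1) := this
      _ = min P Q := by rw [hepsdef]; exact div_mul_cancel₀ _ (ne_of_gt (by linarith))
  have hy'S : ε * ∑ i, |y' i| < min P Q := by
    have h1 : (∑ i, |y' i|) < S + 1 := by
      have : 0 ≤ ∑ i, |y i| := Finset.sum_nonneg fun i _ => abs_nonneg _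
      simp only [hSdef]; linarith
    have := mul_lt_mul_of_pos_left h1 hεpos
    calc ε * ∑ i, |y' i| < ε * (S + 1) := this
      _ = min P Q := by rw [hepsdef]; exact div_mul_cancel₀ _ (ne_of_gt (by linarith))
  refine ⟨a, ?_, ?_⟩
  · have k := key y
    have := abs_sub_lt_iff.mp (lt_of_le_of_lt k hyS)
    have hmin : min P Q ≤ P := min_le_left _ _
    linarith [this.2]
  · have k := key y'
    have := abs_sub_lt_iff.mp (lt_of_le_of_lt k hy'S)
    have hmin : min P Q ≤ Q := min_le_right _ _
    have hQ' : ∑ i, v i * y' i = -Q := by simp [hQdef]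
    linarith [this.1]

/-- Separation by rational linear functionals: if `y' ∉ ℝ≥0 · y`, there is a rational
linear functional nonnegative on `y` and negative on `y'`. -/
theorem stmt6 (n : ℕ) (y y' : Fin n → ℝ) (hy : y ≠ 0) (hy' : y' ≠ 0)
    (h : ¬ ∃ t : ℝ, 0 ≤ t ∧ y' = t • y) :
    ∃ a : Fin n → ℚ, 0 ≤ ∑ i, (a i : ℝ) * y i ∧ ∑ i, (a i : ℝ) * y' i < 0 := by
  set A : ℝ := ∑ i, y i * y i with hA
  set B : ℝ := ∑ i, y i * y' i with hB
  set C : ℝ := ∑ i, y' i * y' i with hC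
  obtain ⟨i0, hi0⟩ : ∃ i, y i ≠ 0 := Function.ne_iff.mp hy
  have hApos : 0 < A := by
    apply Finset.sum_pos' (fun i _ => mul_self_nonneg _)
    exact ⟨i0, Finset.mem_univ _, mul_self_pos.mpr hi0⟩
  by_cases hcol : ∃ t : ℝ, y' = t • y
  · obtain ⟨t, rfl⟩ := hcol
    have ht : t < 0 := by
      by_contra ht
      exact h ⟨t, le_of_not_gt ht, rfl⟩
    apply rat_approx_sep n y
    · exact hApos
    · have : ∑ i, y i * (t • y) i = t * A := by
        simp [hA, Finset.mul_sum, smul_eq_mul]; congr 1; ext i; ring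
      rw [this]
      exact mul_neg_of_neg_of_pos ht hApos
  · -- w = A • y' - B • y is nonzero and orthogonal to y
    set w : Fin n → ℝ := fun i => A * y' i - B * y i with hw
    have hwne : w ≠ 0 := by
      intro hw0
      apply hcol
      refine ⟨B / A, ?_⟩
      ext i
      have := congrFun hw0 i
      simp [hw] at this
      rw [Pi.smul_apply, smul_eq_mul, div_mul_eq_mul_div, eq_div_iff (ne_of_gt hApos)]
      linear_combination this
    have hww : ∑ i, w i * w i = A * (A * C - B * B) := by
      have expand : ∀ i, w i * w i
          = A * A * (y' i * y' i) - 2 * A * B * (y i * y' i) + B * B * (y i * y i) :=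
        fun i => by simp only [hw]; ring
      simp only [expand]
      rw [Finset.sum_add_distrib, Finset.sum_sub_distrib, ← Finset.mul_sum, ← Finset.mul_sum,
        ← Finset.mul_sum, ← hA, ← hB, ← hC]
      ring
    obtain ⟨j, hj⟩ : ∃ j, w j ≠ 0 := Function.ne_iff.mp hwne
    have hwwpos : 0 < ∑ i, w i * w i := by
      apply Finset.sum_pos' (fun i _ => mul_self_nonneg _)
      exact ⟨j, Finset.mem_univ _, mul_self_pos.mpr hj⟩
    have hD : 0 < A * C - B * B := by nlinarith
    set v : Fin n → ℝ := fun i => (C + B) * y i - (A + B) * y' i with hv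
    apply rat_approx_sep n v
    · have : ∑ i, v i * y i = (C + B) * A - (A + B) * B := by
        simp only [hv, hA]
        rw [show (C + B) * A - (A + B) * B
            = (C + B) * ∑ i, y i * y i - (A + B) * B from rfl, hB]
        simp only [Finset.mul_sum, ← Finset.sum_sub_distrib]
        congr 1; ext i; ring
      rw [this]; nlinarith
    · have : ∑ i, v i * y' i = (C + B) * B - (A + B) * C := by
        simp only [hv]
        rw [show (C + B) * B - (A + B) * C
            = (C + B) * B - (A + B) * C from rfl, hB, hC]
        simp only [Finset.mul_sum, ← Finset.sum_sub_distrib]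
        congr 1; ext i; ring
      rw [this]; nlinarith
end
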